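/- arXiv:2003.06552 — 3 statements merged into one kernel-verified Lean document; each statement's English description precedes it below -/
import Mathlib

section
/- For a Merkle tree built from a list of transactions, verification of an honestly generated inclusion proof always succeeds: if MT = BuildMT(TX) and π = GenMTP(MT, tx) for some tx appearing in TX at index i, then VrfyMTP(MT.root, tx, π) = 1. -/
/-!  Merkle tree over a (perfect, length 2^n) list of transactions.
`buildRoot` computes the root label (BuildMT followed by taking `.root`),
`genProof` produces the honest inclusion proof (sibling labels with
direction bits, from the leaf level up to the root), and `vrfyMTP`
recomputes the root from `H tx` and the proof and accepts iff it matches. -/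

variable {τ α : Type}

/-- Root label of the Merkle tree built from transactions `f : Fin (2^n) → τ`,
where `H` hashes a transaction into a label and `comb` hashes the
concatenation of two children labels. -/
def buildRoot (H : τ → α) (comb : α → α → α) : (n : ℕ) → (Fin (2 ^ n) → τ) → α
  | 0, f => H (f ⟨0, by norm_num⟩)
  | n + 1, f =>
      have hpow : 2 ^ n + 2 ^ n = 2 ^ (n + 1) := by rw [pow_succ]; ring
      comb (buildRoot H comb n (fun j => f ⟨j.1, by have := j.2; omega⟩))
           (buildRoot H comb n (fun j => f ⟨2 ^ n + j.1, by have := j.2; omega⟩))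

/-- Honest Merkle inclusion proof for the transaction at position `i`:
the list of sibling subtree roots along the path from the leaf to the root,
each paired with a direction bit (`false` = sibling on the right). -/
def genProof (H : τ → α) (comb : α → α → α) :
    (n : ℕ) → (Fin (2 ^ n) → τ) → Fin (2 ^ n) → List (α × Bool)
  | 0, _, _ => []
  | n + 1, f, i =>
      have hpow : 2 ^ n + 2 ^ n = 2 ^ (n + 1) := by rw [pow_succ]; ring
      let fl : Fin (2 ^ n) → τ := fun j => f ⟨j.1, by have := j.2; omega⟩
      let fr : Fin (2 ^ n) → τ := fun j => f ⟨2 ^ n + j.1, by have := j.2; omega⟩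
      if hi : i.1 < 2 ^ n then
        genProof H comb n fl ⟨i.1, hi⟩ ++ [(buildRoot H comb n fr, false)]
      else
        genProof H comb n fr ⟨i.1 - 2 ^ n, by have := i.2; omega⟩ ++
          [(buildRoot H comb n fl, true)]

/-- Verify a Merkle inclusion proof: recompute the root from `H tx` and the
sibling labels/direction bits, and accept iff it equals `root`. -/
def vrfyMTP [DecidableEq α] (H : τ → α) (comb : α → α → α)
    (root : α) (tx : τ) (π : List (α × Bool)) : Bool :=
  decide ((π.foldl (fun x p => if p.2 then comb p.1 x else comb x p.1) (H tx)) = root)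

/-- **Correctness of Merkle proofs**: verification of an honestly generated
inclusion proof always succeeds: if the tree is built from `TX` and the proof
is generated for the transaction `TX i` at index `i`, then verification
against the tree's root accepts. -/
theorem merkle_proof_correct [DecidableEq α] (H : τ → α) (comb : α → α → α)
    (n : ℕ) (TX : Fin (2 ^ n) → τ) (i : Fin (2 ^ n)) :
    vrfyMTP H comb (buildRoot H comb n TX) (TX i) (genProof H comb n TX i) = true := by
  have key : ∀ (n : ℕ) (TX : Fin (2 ^ n) → τ) (i : Fin (2 ^ n)),
      (genProof H comb n TX i).foldl
        (fun x p => if p.2 then comb p.1 x else comb x p.1) (H (TX i))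
        = buildRoot H comb n TX := by
    intro n
    induction n with
    | zero =>
      intro TX i
      have : i = ⟨0, by norm_num⟩ := Fin.ext (by omega)
      subst this
      simp [genProof, buildRoot]
    | succ n ih =>
      intro TX i
      rw [genProof, buildRoot]
      by_cases hi : i.1 < 2 ^ n
      · rw [dif_pos hi]
        simp only [List.foldl_append, List.foldl_cons, List.foldl_nil]
        norm_num
        congr 1
        exact ih (fun j : Fin (2^n) => TX ⟨j.1, by have := j.2; omega⟩) ⟨i.1, hi⟩
      · rw [dif_neg hi]
        simp only [List.foldl_append, List.foldl_cons, List.foldl_nil]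
        norm_num
        congr 1
        have : TX i = (fun j : Fin (2^n) => TX ⟨2^n + j.1, by have := j.2; omega⟩)
            ⟨i.1 - 2 ^ n, by have := i.2; omega⟩ := by
          congr 1; exact Fin.ext (by simp; omega)
        rw [this]
        exact ih (fun j : Fin (2^n) => TX ⟨2^n + j.1, by have := j.2; omega⟩) ⟨i.1 - 2 ^ n, by have := i.2; omega⟩
  simp [vrfyMTP, key]
end

section
/- If the hash function H is injective, then Merkle tree inclusion proofs are sound: if MT = BuildMT(TX) and VrfyMTP(MT.root, tx, π) = 1 for a proof π whose length equals the depth of the leaf positions of MT (a perfect binary tree of depth n over a list TX of length 2^n), then tx is an element of TX. -/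
variable {τ α : Type}

theorem merkle_aux (H : τ → α) (comb : α → α → α)
    (hH : Function.Injective H)
    (hcomb : ∀ x y x' y', comb x y = comb x' y' → x = x' ∧ y = y') :
    ∀ (n : ℕ) (TX : Fin (2 ^ n) → τ) (tx : τ) (π : List (α × Bool)),
    π.length = n →
    (π.foldl (fun x p => if p.2 then comb p.1 x else comb x p.1) (H tx)) = buildRoot H comb n TX →
    ∃ i : Fin (2 ^ n), TX i = tx := by
  intro n
  induction n with
  | zero =>
    intro TX tx π hlen heq
    rw [List.length_eq_zero_iff] at hlen
    subst hlen
    simp [buildRoot] at heq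
    exact ⟨⟨0, by norm_num⟩, (hH heq).symm⟩
  | succ n ih =>
    intro TX tx π hlen heq
    have hne : π ≠ [] := by intro h; subst h; simp at hlen
    obtain ⟨π', p, rfl⟩ : ∃ π' p, π = π' ++ [p] :=
      ⟨π.dropLast, π.getLast hne, (List.dropLast_append_getLast hne).symm⟩
    have hlen' : π'.length = n := by simpa using hlen
    rw [List.foldl_append] at heq
    simp only [List.foldl_cons, List.foldl_nil] at heq
    rw [buildRoot] at heq
    cases hb : p.2 <;> rw [hb] at heq <;> simp only [if_true, if_false, Bool.false_eq_true] at heq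
    · obtain ⟨h1, h2⟩ := hcomb _ _ _ _ heq
      obtain ⟨j, hj⟩ := ih _ tx π' hlen' h1
      refine ⟨⟨j.1, ?_⟩, hj⟩
      have h := j.2
      have h2' : 2^n + 2^n = 2^(n+1) := by rw [pow_succ]; ring
      omega
    · obtain ⟨h1, h2⟩ := hcomb _ _ _ _ heq
      obtain ⟨j, hj⟩ := ih _ tx π' hlen' h2
      refine ⟨⟨2^n + j.1, ?_⟩, hj⟩
      have h := j.2
      have h2' : 2^n + 2^n = 2^(n+1) := by rw [pow_succ]; ring
      omega

/-- **Soundness of Merkle proofs under injective hashing**: if the leaf hash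
`H` is injective and the combining hash `comb` is injective as a function of
the pair of children labels (distinct pairs of labels yield distinct hashes,
the idealized replacement for collision resistance), then any proof `π` of
length equal to the leaf depth `n` that verifies against the root of the tree
built from `TX` proves that `tx` is an element of `TX`. -/
theorem merkle_proof_sound [DecidableEq α] (H : τ → α) (comb : α → α → α)
    (hH : Function.Injective H)
    (hcomb : ∀ x y x' y', comb x y = comb x' y' → x = x' ∧ y = y')
    (n : ℕ) (TX : Fin (2 ^ n) → τ) (tx : τ) (π : List (α × Bool))
    (hlen : π.length = n)
    (hver : vrfyMTP H comb (buildRoot H comb n TX) tx π = true) :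
    ∃ i : Fin (2 ^ n), TX i = tx := by
  simp only [vrfyMTP, decide_eq_true_eq] at hver
  exact merkle_aux H comb hH hcomb n TX tx π hlen hver
end

section
/- In the augmented one-relay game G_1 where a non-cooperating public full node monitors costlessly, if d_F > v_i then the relay cheating (playing f when the truth is True) with probability q yields expected payoff at most q·(v_i − d_F) + (1−q)·(honest payoff contribution) relative to always playing t, which is strictly less than the always-honest payoff for every q > 0; hence the relay's unique best response, given that the public node debates every fake False claim, is to play t with probability 1. -/
/-- Expected payoff of the relay (conditional on the truth being True) in the
augmented game `G_1` when it cheats (plays `f`) with probability `q` and plays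
`t` with probability `1 − q`, given that the monitoring public full node
debates every fake False claim: cheating yields `v_i − d_F` net (deposit
confiscated, malicious benefit conservatively granted even when caught), while
honesty yields `p` net. -/
noncomputable def relayEU (p vi dF q : ℝ) : ℝ :=
  q * (vi - dF) + (1 - q) * p

/-- **Honesty is the relay's unique best response under public monitoring**:
if `d_F > v_i`, then cheating with probability `q` yields expected payoff at
most `q·(v_i − d_F) + (1−q)·p`, which is strictly less than the always-honest
payoff `p` for every `q > 0`; hence, given that the public node debates every
fake False claim, the relay's unique best response is to play `t` with
probability 1. -/
theorem relay_unique_best_response_honest (p vi dF : ℝ)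
    (h : dF > vi) (hvi : 0 ≤ vi) (hp : 0 < p) :
    (∀ q : ℝ, 0 ≤ q → q ≤ 1 → relayEU p vi dF q ≤ q * (vi - dF) + (1 - q) * p) ∧
    (∀ q : ℝ, 0 < q → q ≤ 1 → relayEU p vi dF q < relayEU p vi dF 0) ∧
    (∀ q : ℝ, 0 ≤ q → q ≤ 1 →
      relayEU p vi dF q ≤ relayEU p vi dF 0 ∧ (relayEU p vi dF q = relayEU p vi dF 0 → q = 0)) := by
  refine ⟨fun q _ _ => le_refl _, fun q hq hq1 => ?_, fun q hq0 hq1 => ?_⟩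
  · simp only [relayEU]
    nlinarith
  · constructor
    · simp only [relayEU]; nlinarith
    · intro he
      simp only [relayEU] at he
      nlinarith
end
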